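/- arXiv:2503.05792 — 5 statements merged into one kernel-verified Lean document; each statement's English description precedes it below -/
import Mathlib

section
/- Soundness of robustness-to-go for until over a finite time domain: if the inductive correspondence (s,t) ⊨ χ ⟺ ρ↬(s,t,t̂,χ) > 0 holds for χ ∈ {φ,ψ} at all times, and the time domain T is finite, then ρ↬(s,t,t̂,φ U_I ψ) > 0 if and only if there exists t' ∈ (I+t) ∩ T with ρ↬(s,t',t̂,ψ) > 0 and ρ↬(s,t'',t̂,φ) > 0 for all t'' ∈ [t,t') ∩ T; i.e., iff (s,t) ⊨ φ U_I ψ. -/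
open Classical

noncomputable section

/-- STL syntax over states of type `X`, with `untl a b` the until operator
over the time interval `[a, b]`. -/
inductive STL (X : Type) : Type
  | top : STL X
  | pred : (X → ℝ) → STL X
  | neg : STL X → STL X
  | conj : STL X → STL X → STL X
  | untl : ℝ → ℝ → STL X → STL X → STL X

namespace STL

variable {X : Type}

/-- Boolean "false". -/
def bot : STL X := neg top

/-- Disjunction, defined from negation and conjunction. -/
def disj (φ ψ : STL X) : STL X := neg (conj (neg φ) (neg ψ))

/-- Pointwise STL satisfaction over a (finite) time domain `T`. -/
def sat (T : Set ℝ) (s : ℝ → X) : STL X → ℝ → Prop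
  | top, _ => True
  | pred f, t => 0 < f (s t)
  | neg φ, t => ¬ sat T s φ t
  | conj φ ψ, t => sat T s φ t ∧ sat T s ψ t
  | untl a b φ ψ, t => ∃ t', t' ∈ T ∧ t' - t ∈ Set.Icc a b ∧ sat T s ψ t' ∧
      ∀ t'', t'' ∈ T → t ≤ t'' → t'' < t' → sat T s φ t''

/-- Ordinary STL robustness, valued in the extended reals. -/
noncomputable def rob (T : Set ℝ) (s : ℝ → X) : STL X → ℝ → EReal
  | top, _ => ⊤
  | pred f, t => (f (s t) : EReal)
  | neg φ, t => - rob T s φ t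
  | conj φ ψ, t => min (rob T s φ t) (rob T s ψ t)
  | untl a b φ ψ, t =>
      sSup ((fun t' => min (rob T s ψ t')
        (sInf ((fun t'' => rob T s φ t'') '' {u | u ∈ T ∧ t ≤ u ∧ u < t'}))) ''
        {u | u ∈ T ∧ u - t ∈ Set.Icc a b})

/-- STL robustness-to-go from threshold time `th`, valued in the extended reals.
Predicates evaluated at times `≤ th` contribute `±∞` according to their sign. -/
noncomputable def robToGo (T : Set ℝ) (s : ℝ → X) (th : ℝ) : STL X → ℝ → EReal
  | top, _ => ⊤
  | pred f, t =>
      if th < t then (f (s t) : EReal)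
      else (if 0 < f (s t) then (⊤ : EReal) else (⊥ : EReal))
  | neg φ, t => - robToGo T s th φ t
  | conj φ ψ, t => min (robToGo T s th φ t) (robToGo T s th ψ t)
  | untl a b φ ψ, t =>
      sSup ((fun t' => min (robToGo T s th ψ t')
        (sInf ((fun t'' => robToGo T s th φ t'') '' {u | u ∈ T ∧ t ≤ u ∧ u < t'}))) ''
        {u | u ∈ T ∧ u - t ∈ Set.Icc a b})

/-- STL formula progression by a time step `Δ` given observed state `x`.
The progressed until interval is `I ← Δ = (I - Δ) ∩ ℝ≥0`, i.e.
`[max (a - Δ) 0, b - Δ]` (which is empty, hence equivalent to `⊥`, when `b < Δ`). -/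
noncomputable def prog (Δ : ℝ) (x : X) : STL X → STL X
  | top => top
  | pred f => if 0 < f x then top else bot
  | neg φ => neg (prog Δ x φ)
  | conj φ ψ => conj (prog Δ x φ) (prog Δ x ψ)
  | untl a b φ ψ =>
      if 0 < a then conj (prog Δ x φ) (untl (max (a - Δ) 0) (b - Δ) φ ψ)
      else disj (prog Δ x ψ) (conj (prog Δ x φ) (untl (max (a - Δ) 0) (b - Δ) φ ψ))

/-- All until intervals in the formula have nonnegative left endpoints. -/
def intervalsNonneg : STL X → Prop
  | top => True
  | pred _ => True
  | neg φ => intervalsNonneg φ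
  | conj φ ψ => intervalsNonneg φ ∧ intervalsNonneg ψ
  | untl a _ φ ψ => 0 ≤ a ∧ intervalsNonneg φ ∧ intervalsNonneg ψ

/-- The convention that predicate values are never exactly zero on the time domain. -/
def nonzeroOn (T : Set ℝ) (s : ℝ → X) : STL X → Prop
  | top => True
  | pred f => ∀ t ∈ T, f (s t) ≠ 0
  | neg φ => nonzeroOn T s φ
  | conj φ ψ => nonzeroOn T s φ ∧ nonzeroOn T s ψ
  | untl _ _ φ ψ => nonzeroOn T s φ ∧ nonzeroOn T s ψ

/-- `tk` and `tk1` are consecutive sample times of the time domain `T`: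
both are samples, `tk < tk1`, and there is no sample strictly between them. -/
def Consecutive (T : Set ℝ) (tk tk1 : ℝ) : Prop :=
  tk ∈ T ∧ tk1 ∈ T ∧ tk < tk1 ∧ ∀ u ∈ T, u ≤ tk ∨ tk1 ≤ u

/-- The time horizon of a (bounded) STL formula. -/
def horizon : STL X → ℝ
  | top => 0
  | pred _ => 0
  | neg φ => horizon φ
  | conj φ ψ => max (horizon φ) (horizon ψ)
  | untl _ b φ ψ => b + max (horizon φ) (horizon ψ)

end STL


theorem Set.Finite.lt_sInf_iff {α : Type*} [CompleteLinearOrder α] {s : Set α} {a : α}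
    (hs : s.Finite) (ha : a ≠ ⊤) : a < sInf s ↔ ∀ x ∈ s, a < x := by
  rcases s.eq_empty_or_nonempty with rfl | hne
  · simpa [lt_top_iff_ne_top] using ha
  · exact hs.lt_csInf_iff hne

namespace STL

variable {X : Type}

theorem robToGo_untl_pos_iff {T : Set ℝ} (hT : T.Finite) (s : ℝ → X) (th : ℝ)
    (φ ψ : STL X) (a b t : ℝ) :
    0 < robToGo T s th (untl a b φ ψ) t ↔
      ∃ t', t' ∈ T ∧ t' - t ∈ Set.Icc a b ∧ 0 < robToGo T s th ψ t' ∧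
        ∀ t'', t'' ∈ T → t ≤ t'' → t'' < t' → 0 < robToGo T s th φ t'' := by
  have hfin (t' : ℝ) : ((fun u => robToGo T s th φ u) '' {u | u ∈ T ∧ t ≤ u ∧ u < t'}).Finite :=
    (hT.subset fun _ hu => hu.1).image _
  -- `0 < sSup` is witnessed in any complete linear order; finiteness is needed only for the `sInf`.
  simp only [robToGo, lt_sSup_iff, Set.exists_mem_image, lt_min_iff,
    (hfin _).lt_sInf_iff EReal.zero_ne_top, Set.forall_mem_image, Set.mem_ofPred_eq, and_imp,
    and_assoc]

end STL

/-- soundness of robustness-to-go for until over a finite time domain. -/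
theorem stmt4 {X : Type} (T : Set ℝ) (hT : T.Finite) (s : ℝ → X) (th : ℝ)
    (φ ψ : STL X) (a b t : ℝ)
    (hφ : ∀ u : ℝ, STL.sat T s φ u ↔ 0 < STL.robToGo T s th φ u)
    (hψ : ∀ u : ℝ, STL.sat T s ψ u ↔ 0 < STL.robToGo T s th ψ u) :
    (0 < STL.robToGo T s th (STL.untl a b φ ψ) t ↔
      ∃ t', t' ∈ T ∧ t' - t ∈ Set.Icc a b ∧ 0 < STL.robToGo T s th ψ t' ∧
        ∀ t'', t'' ∈ T → t ≤ t'' → t'' < t' → 0 < STL.robToGo T s th φ t'') ∧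
    (0 < STL.robToGo T s th (STL.untl a b φ ψ) t ↔
      STL.sat T s (STL.untl a b φ ψ) t) := by
  have h := STL.robToGo_untl_pos_iff hT s th φ ψ a b t
  refine ⟨h, h.trans ?_⟩
  simp only [STL.sat, hφ, hψ]

end
end

section
/- Full soundness of robustness-to-go: for every STL formula φ (built from ⊤, predicates f(x)>0, negation, conjunction, and until), every signal s over a finite time domain, every time t in the domain, and every threshold t̂, the signal satisfies φ at t under pointwise semantics if and only if ρ↬(s,t,t̂,φ) > 0, and this equivalence holds regardless of the value of t̂ (under the convention that predicate values f(s(t)) are never exactly zero, or equivalently identifying non-satisfaction with ρ↬ ≤ 0). -/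
open Classical

noncomputable section

/-! By induction on the formula, `robToGo` is never `0` and its sign is the truth value of
the formula: the predicate case is exactly the nonzero convention (at times `≤ th` only the
sign `±∞` is kept), and negation, `min`, and `sSup`/`sInf` over a finite set of times all
preserve the property "nonzero, and positive iff true", finite extrema being attained. -/

def SignAgrees (P : Prop) (r : EReal) : Prop :=
  (0 < r ↔ P) ∧ r ≠ 0

namespace SignAgrees

variable {P Q : Prop} {r r' : EReal}

lemma neg (h : SignAgrees P r) : SignAgrees (¬P) (-r) :=
  ⟨by rw [EReal.neg_pos, ← h.1, not_lt, le_iff_lt_or_eq, or_iff_left h.2],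
    EReal.neg_eq_zero_iff.not.mpr h.2⟩

lemma min (hP : SignAgrees P r) (hQ : SignAgrees Q r') : SignAgrees (P ∧ Q) (min r r') :=
  ⟨by rw [lt_min_iff, hP.1, hQ.1],
    by rcases min_choice r r' with e | e <;> rw [e]; exacts [hP.2, hQ.2]⟩

variable {ι : Type*} {S : Set ι} {p : ι → Prop} {f : ι → EReal}

lemma sSup_image (hS : S.Finite) (h : ∀ x ∈ S, SignAgrees (p x) (f x)) :
    SignAgrees (∃ x ∈ S, p x) (sSup (f '' S)) := by
  refine ⟨?_, ?_⟩
  · rw [lt_sSup_iff, Set.exists_mem_image]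
    exact exists_congr fun x => and_congr_right fun hx => (h x hx).1
  · rcases S.eq_empty_or_nonempty with rfl | hne
    · simp
    · obtain ⟨x, hx, hmax⟩ := (hne.image f).csSup_mem (hS.image f)
      exact hmax ▸ (h x hx).2

lemma sInf_image (hS : S.Finite) (h : ∀ x ∈ S, SignAgrees (p x) (f x)) :
    SignAgrees (∀ x ∈ S, p x) (sInf (f '' S)) := by
  rcases S.eq_empty_or_nonempty with rfl | hne
  · simp [SignAgrees]
  refine ⟨?_, ?_⟩
  · rw [(hS.image f).lt_csInf_iff (hne.image f), Set.forall_mem_image]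
    exact forall₂_congr fun x hx => (h x hx).1
  · obtain ⟨x, hx, hmin⟩ := (hne.image f).csInf_mem (hS.image f)
    exact hmin ▸ (h x hx).2

end SignAgrees

namespace STL

lemma signAgrees_robToGo {X : Type} {T : Set ℝ} (hT : T.Finite) (s : ℝ → X) (th : ℝ)
    (φ : STL X) (hnz : nonzeroOn T s φ) (t : ℝ) (ht : t ∈ T) :
    SignAgrees (sat T s φ t) (robToGo T s th φ t) := by
  induction φ generalizing t with
  | top => simp [SignAgrees, sat, robToGo]
  | pred f =>
    have hf : f (s t) ≠ 0 := hnz t ht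
    unfold sat robToGo
    split_ifs with _ hpos
    · simp [SignAgrees, hf]
    all_goals simp [SignAgrees, hpos]
  | neg φ ih => exact (ih hnz t ht).neg
  | conj φ ψ ihφ ihψ => exact (ihφ hnz.1 t ht).min (ihψ hnz.2 t ht)
  | untl a b φ ψ ihφ ihψ =>
    have hreach : ∀ t' ∈ {u | u ∈ T ∧ u - t ∈ Set.Icc a b},
        SignAgrees (sat T s ψ t' ∧ ∀ u ∈ {u | u ∈ T ∧ t ≤ u ∧ u < t'}, sat T s φ u)
          (min (robToGo T s th ψ t')
            (sInf ((robToGo T s th φ ·) '' {u | u ∈ T ∧ t ≤ u ∧ u < t'}))) :=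
      fun t' ht' => (ihψ hnz.2 t' ht'.1).min <|
        SignAgrees.sInf_image (hT.subset fun _ hu => hu.1) fun u hu => ihφ hnz.1 u hu.1
    have := SignAgrees.sSup_image (hT.subset fun _ hu => hu.1) hreach
    unfold sat robToGo
    simpa only [Set.mem_ofPred_eq, and_imp, and_assoc] using this

end STL

/-- full soundness of robustness-to-go, for every formula, every
finitely-sampled signal, every time in the domain, and every threshold, under the
convention that predicate values are never exactly zero on the domain. -/
theorem stmt5 {X : Type} (T : Set ℝ) (hT : T.Finite) (s : ℝ → X) (φ : STL X)
    (hnz : STL.nonzeroOn T s φ) (t : ℝ) (ht : t ∈ T) (th : ℝ) :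
    STL.sat T s φ t ↔ 0 < STL.robToGo T s th φ t :=
  (STL.signAgrees_robToGo hT s th φ hnz t ht).1.symm

end
end

section
/- Robustness-to-go coincides with ordinary robustness in the past-free case: if t̂ < t_k, then for every STL formula φ and signal s over a finite time domain, ρ↬(s,t_k,t̂,φ) = ρ(s,t_k,φ). -/
open Classical

noncomputable section

/-! Robustness-to-go differs from robustness only at predicates evaluated at times `≤ th`.
The until operator at time `t` inspects only times `≥ t`, because its interval has a nonnegative
left endpoint, so an evaluation started at `tk > th` never reaches such a time. -/

namespace STL

variable {X : Type}

def untilRob (T : Set ℝ) (a b : ℝ) (rφ rψ : ℝ → EReal) (t : ℝ) : EReal :=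
  sSup ((fun t' => min (rψ t') (sInf (rφ '' {u | u ∈ T ∧ t ≤ u ∧ u < t'}))) ''
    {u | u ∈ T ∧ u - t ∈ Set.Icc a b})

theorem rob_untl (T : Set ℝ) (s : ℝ → X) (a b : ℝ) (φ ψ : STL X) (t : ℝ) :
    rob T s (untl a b φ ψ) t = untilRob T a b (rob T s φ) (rob T s ψ) t := rfl

theorem robToGo_untl (T : Set ℝ) (s : ℝ → X) (th a b : ℝ) (φ ψ : STL X) (t : ℝ) :
    robToGo T s th (untl a b φ ψ) t =
      untilRob T a b (robToGo T s th φ) (robToGo T s th ψ) t := rfl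

theorem untilRob_congr_of_nonneg {T : Set ℝ} {a b t : ℝ} {rφ rψ rφ' rψ' : ℝ → EReal}
    (ha : 0 ≤ a) (hφ : ∀ u, t ≤ u → rφ u = rφ' u) (hψ : ∀ u, t ≤ u → rψ u = rψ' u) :
    untilRob T a b rφ rψ t = untilRob T a b rφ' rψ' t := by
  unfold untilRob
  congr 1
  refine Set.image_congr fun t' ⟨_, ht'⟩ => ?_
  have ht_le : t ≤ t' := by linarith [ht'.1]
  rw [hψ t' ht_le, Set.image_congr fun u hu => hφ u hu.2.1]

theorem robToGo_pred_of_lt (T : Set ℝ) (s : ℝ → X) (f : X → ℝ) {th t : ℝ} (h : th < t) :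
    robToGo T s th (pred f) t = rob T s (pred f) t := by
  simp [robToGo, rob, h]

end STL

theorem stmt6_general {X : Type} (T : Set ℝ) (s : ℝ → X) (φ : STL X)
    (hI : STL.intervalsNonneg φ) (th tk : ℝ) (h : th < tk) :
    STL.robToGo T s th φ tk = STL.rob T s φ tk := by
  induction φ generalizing tk with
  | top => rfl
  | pred f => exact STL.robToGo_pred_of_lt T s f h
  | neg φ ih => simp only [STL.robToGo, STL.rob, ih hI tk h]
  | conj φ ψ ihφ ihψ => simp only [STL.robToGo, STL.rob, ihφ hI.1 tk h, ihψ hI.2 tk h]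
  | untl a b φ ψ ihφ ihψ =>
    obtain ⟨ha, hIφ, hIψ⟩ := hI
    rw [STL.robToGo_untl, STL.rob_untl]
    exact STL.untilRob_congr_of_nonneg ha (fun u hu => ihφ hIφ u (h.trans_le hu))
      (fun u hu => ihψ hIψ u (h.trans_le hu))

/-- robustness-to-go coincides with ordinary robustness when the
threshold lies strictly in the past (`th < tk`). -/
theorem stmt6 {X : Type} (T : Set ℝ) (hT : T.Finite) (s : ℝ → X) (φ : STL X)
    (hI : STL.intervalsNonneg φ) (th tk : ℝ) (h : th < tk) :
    STL.robToGo T s th φ tk = STL.rob T s φ tk :=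
  stmt6_general T s φ hI th tk h

end
end

section
/- Until-rewrite identity for robustness-to-go: for consecutive sample times t_k < t_{k+1} of a finitely-sampled signal s and an interval I = ⟨a,b⟩ with a > 0, the quantity sup_{t' ∈ (I+t_k)∩T} min(ρ↬(s,t',t̂,ψ), inf_{t'' ∈ [t_{k+1},t')∩T} ρ↬(s,t'',t̂,φ)) equals ρ↬(s, t_{k+1}, t̂, φ U_{I←_Δ} ψ), where Δ = t_{k+1} − t_k and I←_Δ = (I − Δ) ∩ ℝ≥0. -/
open Classical

noncomputable section

/-! Since `a > 0`, a sample `u` with `u - tk ∈ [a, b]` lies after `tk`, hence (no sample lying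
strictly between `tk` and `tk1`) at or after `tk1`; so the samples in `I + tk` are exactly those in
`(I ←_Δ) + tk1`, and the left-hand side is the until robustness-to-go at `tk1` verbatim. -/

theorem sub_mem_Icc_iff_sub_mem_Icc_shift {u tk tk1 a b : ℝ} (ha : 0 < a)
    (hu : u ≤ tk ∨ tk1 ≤ u) :
    u - tk ∈ Set.Icc a b ↔ u - tk1 ∈ Set.Icc (max (a - (tk1 - tk)) 0) (b - (tk1 - tk)) := by
  simp only [Set.mem_Icc, max_le_iff]
  constructor
  · rintro ⟨hau, hub⟩
    have htk1 : tk1 ≤ u := hu.resolve_left fun h => by linarith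
    exact ⟨⟨by linarith, by linarith⟩, by linarith⟩
  · rintro ⟨⟨hau, -⟩, hub⟩
    exact ⟨by linarith, by linarith⟩

theorem STL.Consecutive.sampleWindow_eq {T : Set ℝ} {tk tk1 : ℝ} (hc : STL.Consecutive T tk tk1)
    {a b : ℝ} (ha : 0 < a) :
    {u | u ∈ T ∧ u - tk ∈ Set.Icc a b} =
      {u | u ∈ T ∧ u - tk1 ∈ Set.Icc (max (a - (tk1 - tk)) 0) (b - (tk1 - tk))} := by
  ext u
  simp only [Set.mem_ofPred_eq, and_congr_right_iff]
  exact fun hu => sub_mem_Icc_iff_sub_mem_Icc_shift ha (hc.2.2.2 u hu)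

theorem stmt9_general {X : Type} (T : Set ℝ) (s : ℝ → X) (th : ℝ)
    (φ ψ : STL X) (tk tk1 : ℝ) (hc : STL.Consecutive T tk tk1)
    (a b : ℝ) (ha : 0 < a) :
    sSup ((fun t' => min (STL.robToGo T s th ψ t')
        (sInf ((fun t'' => STL.robToGo T s th φ t'') ''
          {u | u ∈ T ∧ tk1 ≤ u ∧ u < t'}))) ''
        {u | u ∈ T ∧ u - tk ∈ Set.Icc a b}) =
    STL.robToGo T s th
      (STL.untl (max (a - (tk1 - tk)) 0) (b - (tk1 - tk)) φ ψ) tk1 := by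
  rw [STL.robToGo, hc.sampleWindow_eq ha]

/-- until-rewrite identity for robustness-to-go, for consecutive
sample times `tk < tk1` and an interval with strictly positive left endpoint. -/
theorem stmt9 {X : Type} (T : Set ℝ) (hT : T.Finite) (s : ℝ → X) (th : ℝ)
    (φ ψ : STL X) (tk tk1 : ℝ) (hc : STL.Consecutive T tk tk1)
    (a b : ℝ) (ha : 0 < a) :
    sSup ((fun t' => min (STL.robToGo T s th ψ t')
        (sInf ((fun t'' => STL.robToGo T s th φ t'') ''
          {u | u ∈ T ∧ tk1 ≤ u ∧ u < t'}))) ''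
        {u | u ∈ T ∧ u - tk ∈ Set.Icc a b}) =
    STL.robToGo T s th
      (STL.untl (max (a - (tk1 - tk)) 0) (b - (tk1 - tk)) φ ψ) tk1 :=
  stmt9_general T s th φ ψ tk tk1 hc a b ha

end
end

section
/- Decomposition of until robustness-to-go at the current step when 0 < I: for consecutive sample times t_k < t_{k+1} and interval I with strictly positive left endpoint, ρ↬(s,t_k,t̂,φ U_I ψ) = min( ρ↬(s,t_k,t̂,φ), ρ↬(s,t_{k+1},t̂, φ U_{I←_Δ} ψ) ), where Δ = t_{k+1}−t_k and I←_Δ = (I−Δ) ∩ ℝ≥0. -/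
open Classical

noncomputable section

/-
With `0 < a`, every witness time `t'` of the until window lies strictly after `tk`, hence at or
after `tk1`. So the shifted window seen from `tk1` is the same set of samples, and each prefix
`[tk, t')` over which `φ` must hold splits into the sample `tk` and the prefix `[tk1, t')`.
The common factor `ρ(φ, tk)` then leaves the supremum over the window.
-/

open Set

theorem sSup_image_min_left {ι α : Type*} [CompleteLinearOrder α] (c : α) (g : ι → α)
    (S : Set ι) : sSup ((fun i => min c (g i)) '' S) = min c (sSup (g '' S)) := by
  simp only [sSup_image, inf_iSup₂_eq]

namespace STL

variable {T : Set ℝ} {tk tk1 : ℝ}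

theorem Consecutive.le_of_lt (hc : Consecutive T tk tk1) {u : ℝ} (hu : u ∈ T) (h : tk < u) :
    tk1 ≤ u :=
  (hc.2.2.2 u hu).resolve_left h.not_ge

theorem Consecutive.setOf_sub_mem_Icc_shift (hc : Consecutive T tk tk1) {a b : ℝ} (ha : 0 < a) :
    {u | u ∈ T ∧ u - tk1 ∈ Icc (max (a - (tk1 - tk)) 0) (b - (tk1 - tk))} =
      {u | u ∈ T ∧ u - tk ∈ Icc a b} := by
  ext u
  simp only [mem_ofPred_eq, mem_Icc, max_le_iff]
  constructor
  · rintro ⟨hu, ⟨ha', -⟩, hb⟩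
    exact ⟨hu, by linarith, by linarith⟩
  · rintro ⟨hu, ha', hb⟩
    have := hc.le_of_lt hu (by linarith)
    exact ⟨hu, ⟨by linarith, by linarith⟩, by linarith⟩

theorem Consecutive.setOf_mem_Ico_eq_insert (hc : Consecutive T tk tk1) {t' : ℝ} (ht' : tk < t') :
    {u | u ∈ T ∧ tk ≤ u ∧ u < t'} = insert tk {u | u ∈ T ∧ tk1 ≤ u ∧ u < t'} := by
  ext u
  simp only [mem_ofPred_eq, mem_insert_iff]
  constructor
  · rintro ⟨hu, htku, hut'⟩
    rcases htku.eq_or_lt with rfl | hlt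
    · exact Or.inl rfl
    · exact Or.inr ⟨hu, hc.le_of_lt hu hlt, hut'⟩
  · rintro (rfl | ⟨hu, htk1u, hut'⟩)
    · exact ⟨hc.1, le_rfl, ht'⟩
    · exact ⟨hu, by linarith [hc.2.2.1], hut'⟩

theorem Consecutive.sInf_image_setOf_mem_Ico {α : Type*} [CompleteLattice α]
    (hc : Consecutive T tk tk1) (f : ℝ → α) {t' : ℝ} (ht' : tk < t') :
    sInf (f '' {u | u ∈ T ∧ tk ≤ u ∧ u < t'}) =
      f tk ⊓ sInf (f '' {u | u ∈ T ∧ tk1 ≤ u ∧ u < t'}) := by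
  rw [hc.setOf_mem_Ico_eq_insert ht', image_insert_eq, sInf_insert]

end STL

theorem stmt10_general {X : Type} (T : Set ℝ) (s : ℝ → X) (th : ℝ)
    (φ ψ : STL X) (tk tk1 : ℝ) (hc : STL.Consecutive T tk tk1)
    (a b : ℝ) (ha : 0 < a) :
    STL.robToGo T s th (STL.untl a b φ ψ) tk =
    min (STL.robToGo T s th φ tk)
      (STL.robToGo T s th
        (STL.untl (max (a - (tk1 - tk)) 0) (b - (tk1 - tk)) φ ψ) tk1) := by
  simp only [STL.robToGo]
  rw [hc.setOf_sub_mem_Icc_shift ha, ← sSup_image_min_left]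
  refine congrArg sSup (image_congr fun t' ⟨_, hwin, _⟩ => ?_)
  rw [hc.sInf_image_setOf_mem_Ico _ (by linarith), min_left_comm]

/-- decomposition of until robustness-to-go at the current step
when the interval has strictly positive left endpoint (`0 < I`). -/
theorem stmt10 {X : Type} (T : Set ℝ) (hT : T.Finite) (s : ℝ → X) (th : ℝ)
    (φ ψ : STL X) (tk tk1 : ℝ) (hc : STL.Consecutive T tk tk1)
    (a b : ℝ) (ha : 0 < a) :
    STL.robToGo T s th (STL.untl a b φ ψ) tk =
    min (STL.robToGo T s th φ tk)
      (STL.robToGo T s th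
        (STL.untl (max (a - (tk1 - tk)) 0) (b - (tk1 - tk)) φ ψ) tk1) :=
  stmt10_general T s th φ ψ tk tk1 hc a b ha

end
end
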